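/- arXiv:2207.08509 — 2 statements merged into one kernel-verified Lean document; each statement's English description precedes it below -/
import Mathlib

section
/- The function $f(z) = z\log\log|z|^{-2}$ (extended by $f(0)=0$) is not continuously differentiable on any neighbourhood of $0$ in $\mathbb{C} \cong \mathbb{R}^2$: there is no $C^1$ function on $B_{1/2}$ agreeing with $f$. -/
/-! Along the positive real axis the difference quotient of `f` at `0` is `log log t⁻²`, which is
unbounded as `t → 0⁺`, so no function agreeing with `f` near `0` is even differentiable at `0`. -/

open Complex Metric Filter Topology

theorem Real.tendsto_log_log_rpow_neg_two_nhdsGT_zero :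
    Tendsto (fun t : ℝ => Real.log (Real.log (t ^ (-2 : ℝ)))) (𝓝[>] 0) atTop := by
  have hlog : Tendsto (fun t : ℝ => Real.log (t ^ (-2 : ℝ))) (𝓝[>] 0) atTop := by
    have : Tendsto (fun t : ℝ => -2 * Real.log t) (𝓝[>] 0) atTop :=
      Real.tendsto_log_nhdsGT_zero.const_mul_atBot_of_neg (by norm_num)
    refine this.congr' ?_
    filter_upwards [self_mem_nhdsWithin] with t (ht : 0 < t)
    rw [Real.log_rpow ht]
  exact Real.tendsto_log_atTop.comp hlog

theorem not_differentiableAt_zero_of_eventuallyEq_smul {E : Type*} [NormedAddCommGroup E]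
    [NormedSpace ℝ E] {f φ : ℝ → E} (h0 : f 0 = 0) (hf : f =ᶠ[𝓝[>] 0] fun t => t • φ t)
    (hφ : Tendsto (fun t => ‖φ t‖) (𝓝[>] 0) atTop) : ¬ DifferentiableAt ℝ f 0 := by
  intro hdiff
  have hslope : Tendsto (fun t => ‖slope f 0 t‖) (𝓝[>] 0) (𝓝 ‖deriv f 0‖) :=
    (hdiff.hasDerivAt.tendsto_slope.mono_left (nhdsWithin_mono _ fun t ht => ne_of_gt ht)).norm
  refine not_tendsto_nhds_of_tendsto_atTop (hφ.congr' ?_) _ hslope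
  filter_upwards [hf, self_mem_nhdsWithin] with t hft (ht : 0 < t)
  rw [slope_def_module, hft, h0, sub_zero, sub_zero, smul_smul, inv_mul_cancel₀ ht.ne', one_smul]

/-- The function `f(z) = z log log |z|⁻²` (with `f(0) = 0`) is not `C¹` near the
origin: there is no `C¹` function (in the real sense) on `B_{1/2}` agreeing with `f`. -/
theorem stmt5 :
    ¬ ∃ g : ℂ → ℂ,
        ContDiffOn ℝ 1 g (ball (0 : ℂ) (1/2)) ∧
        Set.EqOn g
          (fun z : ℂ => if z = 0 then (0 : ℂ)
            else z * (Real.log (Real.log (‖z‖ ^ (-2 : ℝ))) : ℂ))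
          (ball (0 : ℂ) (1/2)) := by
  rintro ⟨g, hg, heq⟩
  have h0 : (0 : ℂ) ∈ ball (0 : ℂ) (1/2) := mem_ball_self (by norm_num)
  have hdiff : DifferentiableAt ℝ (fun t : ℝ => g t) 0 := by
    have hg0 : DifferentiableAt ℝ g (ofRealCLM 0) := by
      simpa using (hg.differentiableOn one_ne_zero).differentiableAt (isOpen_ball.mem_nhds h0)
    exact hg0.comp 0 ofRealCLM.differentiableAt
  refine not_differentiableAt_zero_of_eventuallyEq_smul
    (φ := fun t => (Real.log (Real.log (t ^ (-2 : ℝ))) : ℂ)) (by simpa using heq h0) ?_ ?_ hdiff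
  · filter_upwards [Ioo_mem_nhdsGT (by norm_num : (0 : ℝ) < 1/2)] with t ⟨ht0, ht⟩
    have htball : (t : ℂ) ∈ ball (0 : ℂ) (1/2) := by
      rwa [mem_ball_zero_iff, norm_real, Real.norm_of_nonneg ht0.le]
    simpa [ht0.ne', Real.norm_of_nonneg ht0.le, Complex.real_smul] using heq htball
  · simp only [norm_real, Real.norm_eq_abs]
    exact tendsto_abs_atTop_atTop.comp Real.tendsto_log_log_rpow_neg_two_nhdsGT_zero
end

section
/- There exists a constant $C > 0$ such that for all $\nu \geq 1$ and all $z$ with $0 < |z| < 1/2$, $|\overline{\partial} f_\nu(z)| \leq C$, where $f_\nu(z) = z|z|^{1/\nu}\log\log|z|^{-2}$; i.e. the sup-norms $\|\overline{\partial} f_\nu\|_{C^0(B_{1/2})}$ are bounded uniformly in $\nu$. -/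
/-
Write `f_ν(w) = w · g(|w|)` with the real radial profile `g(r) = r^a log log r⁻²`, `a = 1/ν`.
Since `∂̄|w| = w / (2|w|)`, away from the origin `∂̄ f_ν(z) = z² g'(|z|) / (2|z|)`, so
`|∂̄ f_ν(z)| = r^a |a log T - 2/T| / 2` with `r = |z|`, `T = log r⁻² > 1`. Both terms are
harmless: `2 r^a / T ≤ 2`, and `a r^a log T ≤ a r^a T = -2 s log s ≤ 2` with `s = r^a`.
At the origin `g(r) → 0`, so `f_ν(w) = o(|w|)` and `∂̄ f_ν(0) = 0`.
-/

open Complex Metric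

/-- The Wirtinger derivative `∂̄ = ½(∂ₓ + i ∂_y)` of a map `ℂ → ℂ`. -/
noncomputable def dbar (f : ℂ → ℂ) (z : ℂ) : ℂ :=
  (1/2 : ℂ) * (fderiv ℝ f z 1 + Complex.I * fderiv ℝ f z Complex.I)

open Filter Topology Asymptotics

theorem hasFDerivAt_norm_of_ne_zero {E : Type*} [NormedAddCommGroup E] [InnerProductSpace ℝ E]
    {x : E} (hx : x ≠ 0) : HasFDerivAt (‖·‖) (‖x‖⁻¹ • innerSL ℝ x) x := by
  have hsq : ‖x‖ ^ 2 ≠ 0 := by positivity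
  convert (hasStrictFDerivAt_norm_sq x).hasFDerivAt.sqrt hsq using 1
  · simp [Real.sqrt_sq (norm_nonneg _)]
  · ext v
    simp only [smul_apply, coe_innerSL_apply, smul_eq_mul, Real.sqrt_sq (norm_nonneg _),
      nsmul_eq_mul, Nat.cast_ofNat]
    field_simp

theorem dbar_mul_ofReal_comp_norm {g : ℝ → ℝ} {g' : ℝ} {z : ℂ} (hz : z ≠ 0)
    (hg : HasDerivAt g g' ‖z‖) :
    dbar (fun w => w * (g ‖w‖ : ℂ)) z = z ^ 2 * (g' / (2 * ‖z‖) : ℝ) := by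
  have hφ := ofRealCLM.hasFDerivAt.comp z (hg.comp_hasFDerivAt z (hasFDerivAt_norm_of_ne_zero hz))
  have hf : HasFDerivAt (fun w => w * (g ‖w‖ : ℂ)) _ z := (hasFDerivAt_id z).mul hφ
  rw [dbar, hf.fderiv]
  simp only [ContinuousLinearMap.comp_smulₛₗ, Real.ringHom_apply, coe_smul, add_apply,
    smul_apply, ContinuousLinearMap.comp_apply, coe_innerSL_apply, Complex.inner, conj_re, conj_im,
    ofRealCLM_apply, real_smul, smul_eq_mul, id_eq, ContinuousLinearMap.id_apply, mul_re, I_re,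
    I_im, one_mul, mul_one, zero_mul, mul_neg, sub_neg_eq_add, zero_add, ofReal_div, ofReal_mul,
    ofReal_inv, ofReal_ofNat]
  have hr : (‖z‖ : ℂ) ≠ 0 := by simpa using hz
  field_simp
  linear_combination (z * g') * re_add_im z + (‖z‖ * g ‖z‖ : ℂ) * I_sq

theorem hasFDerivAt_mul_ofReal_comp_norm_zero {g : ℝ → ℝ} (hg : Tendsto g (𝓝[>] 0) (𝓝 0)) :
    HasFDerivAt (fun w : ℂ => w * (g ‖w‖ : ℂ)) (0 : ℂ →L[ℝ] ℂ) 0 := by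
  rw [hasFDerivAt_iff_isLittleO_nhds_zero]
  simp only [zero_add, zero_mul, sub_zero, zero_apply]
  rw [← nhdsNE_sup_pure]
  refine IsLittleO.sup ?_ (isLittleO_pure.2 (zero_mul _))
  have hc : Tendsto (fun w : ℂ => (g ‖w‖ : ℂ)) (𝓝[≠] 0) (𝓝 0) := by
    simpa [Function.comp_def] using
      (continuous_ofReal.tendsto 0).comp (hg.comp (tendsto_norm_nhdsNE_zero (E := ℂ)))
  simpa using (isBigO_refl (fun w : ℂ => w) (𝓝[≠] 0)).mul_isLittleO ((isLittleO_one_iff ℂ).2 hc)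

theorem norm_dbar_mul_ofReal_comp_norm {g : ℝ → ℝ} {g' : ℝ} {z : ℂ} (hz : z ≠ 0)
    (hg : HasDerivAt g g' ‖z‖) :
    ‖dbar (fun w => w * (g ‖w‖ : ℂ)) z‖ = ‖z‖ * |g'| / 2 := by
  have hr₀ : 0 < ‖z‖ := norm_pos_iff.2 hz
  rw [dbar_mul_ofReal_comp_norm hz hg, norm_mul, norm_pow, norm_real, Real.norm_eq_abs, abs_div,
    abs_of_pos (by positivity : 0 < 2 * ‖z‖)]
  field_simp

noncomputable def rpowLogLog (a r : ℝ) : ℝ := r ^ a * Real.log (Real.log (r ^ (-2 : ℝ)))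

theorem one_lt_log_rpow_neg_two {r : ℝ} (hr₀ : 0 < r) (hr : r < 1 / 2) :
    1 < Real.log (r ^ (-2 : ℝ)) := by
  have hlog : Real.log r < -Real.log 2 := by
    rw [← Real.log_inv, ← one_div]
    exact Real.log_lt_log hr₀ hr
  rw [Real.log_rpow hr₀]
  linarith [Real.log_two_gt_d9]

theorem hasDerivAt_rpowLogLog (a : ℝ) {r : ℝ} (hr : 0 < r) (hT : Real.log (r ^ (-2 : ℝ)) ≠ 0) :
    HasDerivAt (rpowLogLog a)
      (r ^ a * (a * Real.log (Real.log (r ^ (-2 : ℝ))) - 2 / Real.log (r ^ (-2 : ℝ))) / r) r := by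
  have hpow := fun b : ℝ => Real.hasDerivAt_rpow_const (p := b) (Or.inl hr.ne')
  refine ((hpow a).mul (((hpow (-2)).log (Real.rpow_pos_of_pos hr _).ne').log hT)).congr_deriv ?_
  rw [Real.rpow_sub hr, Real.rpow_sub hr, Real.rpow_one]
  field_simp
  ring

theorem rpow_mul_abs_sub_le_two {a r : ℝ} (ha : 0 < a) (hr₀ : 0 < r) (hr : r < 1 / 2) :
    r ^ a * |a * Real.log (Real.log (r ^ (-2 : ℝ))) - 2 / Real.log (r ^ (-2 : ℝ))| ≤ 2 := by
  set T := Real.log (r ^ (-2 : ℝ))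
  set s := r ^ a
  have hT : 1 < T := one_lt_log_rpow_neg_two hr₀ hr
  have hs₀ : 0 < s := Real.rpow_pos_of_pos hr₀ a
  have hs₁ : s ≤ 1 := Real.rpow_le_one hr₀.le (by linarith) ha.le
  have haT : a * T = -2 * Real.log s := by
    simp only [T, s, Real.log_rpow hr₀]; ring
  have hfirst : a * s * Real.log T ≤ 2 := calc
    a * s * Real.log T ≤ a * s * T := by gcongr; exact Real.log_le_self (by linarith)
    _ = 2 * Real.negMulLog s := by rw [Real.negMulLog]; linear_combination s * haT
    _ ≤ 2 := by linarith [Real.negMulLog_le_one_sub_self hs₀.le]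
  have hsecond : s * (2 / T) ≤ 2 := calc
    s * (2 / T) ≤ 1 * 2 := by gcongr; exact div_le_self zero_le_two hT.le
    _ = 2 := one_mul 2
  have hfirst₀ : 0 ≤ a * s * Real.log T := mul_nonneg (by positivity) (Real.log_nonneg hT.le)
  have hsecond₀ : 0 ≤ s * (2 / T) := by positivity
  rw [← abs_of_pos hs₀, ← abs_mul, abs_le]
  constructor <;> nlinarith

theorem tendsto_rpowLogLog_nhdsGT_zero {a : ℝ} (ha : 0 < a) :
    Tendsto (rpowLogLog a) (𝓝[>] 0) (𝓝 0) := by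
  have hupper : Tendsto (fun r => -2 * (Real.log r * r ^ a)) (𝓝[>] 0) (𝓝 0) := by
    simpa using (tendsto_log_mul_rpow_nhdsGT_zero ha).const_mul (-2)
  refine tendsto_of_tendsto_of_tendsto_of_le_of_le' tendsto_const_nhds hupper ?_ ?_ <;>
    filter_upwards [Ioo_mem_nhdsGT (by norm_num : (0 : ℝ) < 1 / 2)] with r ⟨hr₀, hr⟩ <;>
    have hT := one_lt_log_rpow_neg_two hr₀ hr
  · exact mul_nonneg (Real.rpow_nonneg hr₀.le a) (Real.log_nonneg hT.le)
  · calc rpowLogLog a r ≤ r ^ a * Real.log (r ^ (-2 : ℝ)) := by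
          rw [rpowLogLog]; gcongr; exact Real.log_le_self (by positivity)
      _ = -2 * (Real.log r * r ^ a) := by rw [Real.log_rpow hr₀]; ring

theorem ite_eq_mul_ofReal_rpowLogLog (a : ℝ) :
    (fun w : ℂ => if w = 0 then (0 : ℂ)
        else w * ((‖w‖ ^ a : ℝ) : ℂ) * (Real.log (Real.log (‖w‖ ^ (-2 : ℝ))) : ℂ)) =
      fun w => w * (rpowLogLog a ‖w‖ : ℂ) := by
  funext w
  split_ifs with hw
  · simp [hw]
  · simp [rpowLogLog, mul_assoc]

/-- The sup-norms `‖∂̄ f_ν‖_{C⁰(B_{1/2})}` of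
`f_ν(z) = z |z|^{1/ν} log log |z|⁻²` (extended by `0` at the origin)
are bounded uniformly in `ν`. -/
theorem stmt11 :
    ∃ C > (0 : ℝ), ∀ ν : ℕ, 1 ≤ ν → ∀ z ∈ ball (0 : ℂ) (1/2),
      ‖dbar (fun w : ℂ => if w = 0 then (0 : ℂ)
          else w * ((‖w‖ ^ ((1 : ℝ)/ν) : ℝ) : ℂ)
            * (Real.log (Real.log ((‖w‖) ^ (-2 : ℝ))) : ℂ)) z‖ ≤ C := by
  refine ⟨1, one_pos, fun ν hν z hz => ?_⟩
  have ha : (0 : ℝ) < 1 / ν := one_div_pos.2 (Nat.cast_pos.2 hν)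
  rw [ite_eq_mul_ofReal_rpowLogLog]
  obtain rfl | hz₀ := eq_or_ne z 0
  · rw [dbar, (hasFDerivAt_mul_ofReal_comp_norm_zero (tendsto_rpowLogLog_nhdsGT_zero ha)).fderiv]
    simp
  have hr₀ : 0 < ‖z‖ := norm_pos_iff.2 hz₀
  have hr : ‖z‖ < 1 / 2 := mem_ball_zero_iff.1 hz
  have hT := one_lt_log_rpow_neg_two hr₀ hr
  rw [norm_dbar_mul_ofReal_comp_norm hz₀ (hasDerivAt_rpowLogLog _ hr₀ (by linarith)), abs_div,
    abs_of_pos hr₀, mul_div_cancel₀ _ hr₀.ne', abs_mul, abs_of_pos (Real.rpow_pos_of_pos hr₀ _)]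
  linarith [rpow_mul_abs_sub_le_two ha hr₀ hr]
end
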